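/- arXiv:math/9810114 — 5 statements merged into one kernel-verified Lean document; each statement's English description precedes it below -/
import Mathlib

section
/- Let r be a natural number and let c : (Fin r → ℤ) →₀ ℂ be a finitely supported family of complex coefficients. Suppose that for every z : Fin r → ℂ with ‖z i‖ = 1 for all i, the Laurent polynomial sum ∑_{n ∈ supp(c)} c(n) · ∏_i (z i)^{n i} equals 0 (integer power z^{n i} is the zpow, well defined since each z i is nonzero). Then c = 0. -/
/-!
On the torus each monomial `z ↦ ∏ i, z i ^ n i` is a multiplicative character
`(S¹)^r → ℂ`, and different exponent vectors give different characters, since for every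
`k ≠ 0` some point of the circle (e.g. `exp (iπ / k)`) has `k`-th power different from `1`.
Distinct characters are linearly independent (Dedekind–Artin), so a Laurent polynomial
vanishing on the torus has all coefficients zero.
-/

open Finset

lemma Circle.exists_zpow_ne_one {k : ℤ} (hk : k ≠ 0) : ∃ w : Circle, w ^ k ≠ 1 := by
  refine ⟨Circle.exp (Real.pi / k), ?_⟩
  rw [← Circle.exp_intCast_mul, mul_div_cancel₀ _ (Int.cast_ne_zero.mpr hk), Ne,
    Circle.exp_eq_one]
  rintro ⟨n, hn⟩
  have h2n : (1 : ℝ) = 2 * n :=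
    mul_right_cancel₀ Real.pi_ne_zero (by linarith : 1 * Real.pi = (2 * n) * Real.pi)
  have : (1 : ℤ) = 2 * n := by exact_mod_cast h2n
  omega

section TorusCharacter

variable {ι : Type*} [Fintype ι]

noncomputable def torusChar (n : ι → ℤ) : (ι → Circle) →* ℂ where
  toFun z := ∏ i, (z i : ℂ) ^ n i
  map_one' := by simp
  map_mul' z w := by simp [mul_zpow, prod_mul_distrib]

lemma torusChar_mulSingle [DecidableEq ι] (n : ι → ℤ) (j : ι) (w : Circle) :
    torusChar n (Pi.mulSingle j w) = (w : ℂ) ^ n j := by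
  rw [torusChar, MonoidHom.coe_mk, OneHom.coe_mk, prod_eq_single j (by simp_all) (by simp)]
  simp

lemma torusChar_injective : Function.Injective (torusChar (ι := ι)) := by
  classical
  intro n m hnm
  by_contra hne
  obtain ⟨j, hj⟩ := Function.ne_iff.mp hne
  obtain ⟨w, hw⟩ := Circle.exists_zpow_ne_one (sub_ne_zero.mpr hj)
  have hnm_w := congr($hnm (Pi.mulSingle j w))
  rw [torusChar_mulSingle, torusChar_mulSingle] at hnm_w
  apply hw
  ext
  rw [Circle.coe_zpow, zpow_sub₀ (Circle.coe_ne_zero w), hnm_w,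
    div_self (zpow_ne_zero _ (Circle.coe_ne_zero w)), Circle.coe_one]

end TorusCharacter

/-- A complex Laurent polynomial in `r` variables (encoded by its finitely supported
coefficient family `c : (Fin r → ℤ) →₀ ℂ`) which vanishes at every point of the real torus
`(S¹)^r ⊂ (ℂ*)^r` is identically zero. -/
theorem laurent_vanishing_on_torus_eq_zero
    (r : ℕ) (c : (Fin r → ℤ) →₀ ℂ)
    (h : ∀ z : Fin r → ℂ, (∀ i, ‖z i‖ = 1) →
      ∑ n ∈ c.support, c n * ∏ i, z i ^ n i = 0) :
    c = 0 := by
  have hli : LinearIndependent ℂ (fun n : Fin r → ℤ => ⇑(torusChar n)) :=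
    (linearIndependent_monoidHom (Fin r → Circle) ℂ).comp torusChar torusChar_injective
  refine linearIndependent_iff.mp hli c ?_
  funext z
  simpa [Finsupp.linearCombination_apply, Finsupp.sum, torusChar] using
    h (fun i => z i) fun i => Circle.norm_coe (z i)
end

section
/- Let r be a natural number and let p be a nonzero multivariate polynomial in r variables over ℂ (p : MvPolynomial (Fin r) ℂ, p ≠ 0). Then there exists z : Fin r → ℂ with ‖z i‖ = 1 for all i such that the evaluation of p at z is nonzero. -/
open MvPolynomial

lemma circle_infinite : {z : ℂ | ‖z‖ = 1}.Infinite := by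
  have h : Set.InjOn (fun t : ℝ => Complex.exp (t * Complex.I)) (Set.Icc 0 Real.pi) := by
    intro a ha b hb hab
    have : Real.cos a = Real.cos b := by
      have := congrArg Complex.re hab
      simpa [Complex.exp_mul_I, Complex.cos_ofReal_re] using this
    exact Real.injOn_cos ha hb this
  have hmaps : Set.MapsTo (fun t : ℝ => Complex.exp (t * Complex.I)) (Set.Icc 0 Real.pi)
      {z : ℂ | ‖z‖ = 1} := fun t _ => by
    simpa using Complex.norm_exp_ofReal_mul_I t
  exact Set.infinite_of_injOn_mapsTo h hmaps (Set.infinite_coe_iff.mp (Set.Icc.infinite Real.pi_pos))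

/-- A nonzero multivariate complex polynomial in `r` variables has a nonzero value at some
point of the real torus `(S¹)^r`: the intersection of any non-empty Zariski open subset of
`(ℂ*)^r` with the torus `(S¹)^r` is non-empty. -/
theorem exists_torus_point_eval_ne_zero
    (r : ℕ) (p : MvPolynomial (Fin r) ℂ) (hp : p ≠ 0) :
    ∃ z : Fin r → ℂ, (∀ i, ‖z i‖ = 1) ∧ MvPolynomial.eval z p ≠ 0 := by
  induction r with
  | zero =>
    obtain ⟨a, rfl⟩ := C_surjective (Fin 0) p
    exact ⟨fun i => i.elim0, fun i => i.elim0, by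
      simpa using fun h => hp (by rw [h]; simp)⟩
  | succ n ih =>
    set q := finSuccEquiv ℂ n p with hq
    have hq0 : q ≠ 0 := by
      simpa [hq] using (map_ne_zero_iff _ (finSuccEquiv ℂ n).injective).mpr hp
    have hlc : q.leadingCoeff ≠ 0 := Polynomial.leadingCoeff_ne_zero.mpr hq0
    obtain ⟨s, hs, hev⟩ := ih q.leadingCoeff hlc
    set q' := q.map (eval s) with hq'
    have hcoeff : q'.coeff q.natDegree = eval s q.leadingCoeff :=
      Polynomial.coeff_map _ _
    have hq'0 : q' ≠ 0 := fun h =>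
      hev (by rw [← hcoeff, h, Polynomial.coeff_zero])
    have hroots : (q'.roots.toFinset : Set ℂ).Finite := (q'.roots.toFinset).finite_toSet
    obtain ⟨a, ha, hna⟩ := (circle_infinite.diff hroots).nonempty
    refine ⟨Fin.cons a s, ?_, ?_⟩
    · intro i
      refine Fin.cases ?_ ?_ i
      · exact ha
      · exact hs
    · rw [eval_eq_eval_mv_eval']
      intro h
      apply hna
      simp only [Finset.mem_coe, Multiset.mem_toFinset]
      exact (Polynomial.mem_roots hq'0).mpr h
end

section
/- Let s be a natural number and let f : (Fin s → ℝ) → ℝ be a function which is analytic on all of ℝ^s. If f is not identically zero (there exists x with f x ≠ 0), then the zero set {x : Fin s → ℝ | f x = 0} has Lebesgue measure zero. -/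
open MeasureTheory

/-- One-dimensional case: the zero set of a real analytic function on `ℝ` which is not
identically zero has measure zero (its zeros are isolated). -/
private lemma one_dim_zero_set (g : ℝ → ℝ) (hg : AnalyticOnNhd ℝ g Set.univ)
    (hne : ∃ t, g t ≠ 0) : volume {t : ℝ | g t = 0} = 0 := by
  apply measure_null_of_locally_null
  intro x _
  rcases (hg x trivial).eventually_eq_zero_or_eventually_ne_zero with h | h
  · exfalso
    obtain ⟨t, ht⟩ := hne
    exact ht (hg.eqOn_zero_of_preconnected_of_frequently_eq_zero
      isPreconnected_univ (Set.mem_univ x)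
      ((h.filter_mono nhdsWithin_le_nhds).frequently) (Set.mem_univ t))
  · have h' : ∀ᶠ z in nhds x, z ≠ x → g z ≠ 0 := by
      have := eventually_nhdsWithin_iff.mp h
      filter_upwards [this] with z hz hzx
      exact hz hzx
    refine ⟨{t : ℝ | g t = 0} ∩ {z | z ≠ x → g z ≠ 0},
      Filter.inter_mem self_mem_nhdsWithin (nhdsWithin_le_nhds h'), ?_⟩
    refine measure_mono_null ?_ (measure_singleton x)
    rintro z ⟨hz1, hz2⟩
    have : z = x := by
      by_contra hzx
      exact hz2 hzx hz1
    simp [this]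

private lemma key_zero_set : ∀ (s : ℕ) (f : (Fin s → ℝ) → ℝ),
    AnalyticOnNhd ℝ f Set.univ → (∃ x, f x ≠ 0) →
    volume {x : Fin s → ℝ | f x = 0} = 0 := by
  intro s
  induction s with
  | zero =>
    rintro f _ ⟨x, hx⟩
    have hempty : {y : Fin 0 → ℝ | f y = 0} = ∅ := by
      ext y
      simp [Subsingleton.elim y x, hx]
    simp [hempty]
  | succ n ih =>
    rintro f hf ⟨x0, hx0⟩
    set e := MeasurableEquiv.piFinSuccAbove (fun _ : Fin (n+1) => ℝ) 0 with he
    have hmp := volume_preserving_piFinSuccAbove (fun _ : Fin (n+1) => ℝ) 0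
    -- the inverse of the equivalence is analytic (it is linear)
    have hins : AnalyticOnNhd ℝ
        (fun p : ℝ × (Fin n → ℝ) => (e.symm p : Fin (n+1) → ℝ)) Set.univ := by
      apply AnalyticOnNhd.pi
      intro i
      induction i using Fin.cases with
      | zero =>
        have : (fun p : ℝ × (Fin n → ℝ) => (e.symm p : Fin (n+1) → ℝ) 0)
            = fun p => p.1 := by
          ext p
          simp [he, MeasurableEquiv.piFinSuccAbove_symm_apply]
        rw [this]
        exact (ContinuousLinearMap.fst ℝ ℝ (Fin n → ℝ)).analyticOnNhd _
      | succ j =>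
        have : (fun p : ℝ × (Fin n → ℝ) => (e.symm p : Fin (n+1) → ℝ) j.succ)
            = fun p => p.2 j := by
          ext p
          rw [← Fin.zero_succAbove j]
          simp only [he, MeasurableEquiv.piFinSuccAbove_symm_apply,
            Fin.insertNthEquiv_apply, Fin.insertNth_apply_succAbove]
        rw [this]
        exact ((ContinuousLinearMap.proj j).comp
          (ContinuousLinearMap.snd ℝ ℝ (Fin n → ℝ))).analyticOnNhd _
    have hg : AnalyticOnNhd ℝ (fun p : ℝ × (Fin n → ℝ) => f (e.symm p)) Set.univ :=
      hf.comp hins (Set.mapsTo_univ _ _)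
    -- measurability of the transported zero set
    have hScont : Continuous (fun p : ℝ × (Fin n → ℝ) => f (e.symm p)) :=
      continuousOn_univ.mp hg.continuousOn
    have hS : MeasurableSet {p : ℝ × (Fin n → ℝ) | f (e.symm p) = 0} :=
      (isClosed_eq hScont continuous_const).measurableSet
    have hZ : volume {x : Fin (n+1) → ℝ | f x = 0}
        = volume {p : ℝ × (Fin n → ℝ) | f (e.symm p) = 0} := by
      have hpre : {x : Fin (n+1) → ℝ | f x = 0}
          = e ⁻¹' {p : ℝ × (Fin n → ℝ) | f (e.symm p) = 0} := by
        ext x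
        simp
      rw [hpre, hmp.measure_preimage hS.nullMeasurableSet]
    rw [hZ, Measure.volume_eq_prod, Measure.measure_prod_null hS]
    -- the set of "bad" first coordinates is the zero set of a 1D analytic function
    set c : Fin n → ℝ := (e x0).2 with hc
    have hh : AnalyticOnNhd ℝ (fun t : ℝ => f (e.symm (t, c))) Set.univ := by
      have hlin : AnalyticOnNhd ℝ (fun t : ℝ => ((t, c) : ℝ × (Fin n → ℝ))) Set.univ :=
        (analyticOnNhd_id).prod analyticOnNhd_const
      exact hg.comp hlin (Set.mapsTo_univ _ _)
    have hhne : ∃ t : ℝ, f (e.symm (t, c)) ≠ 0 := by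
      refine ⟨(e x0).1, ?_⟩
      have : ((e x0).1, c) = e x0 := by simp [hc]
      rw [this, e.symm_apply_apply]
      exact hx0
    have hBnull : volume {t : ℝ | f (e.symm (t, c)) = 0} = 0 :=
      one_dim_zero_set _ hh hhne
    have hae : ∀ᵐ t : ℝ, f (e.symm (t, c)) ≠ 0 := by
      rw [MeasureTheory.ae_iff]
      simpa using hBnull
    filter_upwards [hae] with t ht
    -- slice analytic
    have hslice : AnalyticOnNhd ℝ (fun y : Fin n → ℝ => f (e.symm (t, y))) Set.univ := by
      have hlin : AnalyticOnNhd ℝ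
          (fun y : Fin n → ℝ => ((t, y) : ℝ × (Fin n → ℝ))) Set.univ :=
        analyticOnNhd_const.prod (analyticOnNhd_id)
      exact hg.comp hlin (Set.mapsTo_univ _ _)
    have := ih (fun y : Fin n → ℝ => f (e.symm (t, y))) hslice ⟨c, ht⟩
    simpa [Set.preimage, Pi.zero_apply] using this

/-- The zero set of a real analytic function on `ℝ^s` which is not identically zero has
Lebesgue measure zero. -/
theorem zero_set_of_analytic_measure_zero
    (s : ℕ) (f : (Fin s → ℝ) → ℝ)
    (hf : AnalyticOn ℝ f Set.univ)
    (hne : ∃ x, f x ≠ 0) :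
    volume {x : Fin s → ℝ | f x = 0} = 0 := by
  rw [analyticOn_univ] at hf
  exact key_zero_set s f hf hne
end

section
/- Let r, a, b be natural numbers and let A be a b × a matrix with entries in the polynomial ring MvPolynomial (Fin r) ℂ. For z : Fin r → ℂ let A(z) denote the complex matrix obtained by evaluating every entry of A at z. Then there exists a nonzero polynomial q : MvPolynomial (Fin r) ℂ such that for every z with q(z) ≠ 0 and every w : Fin r → ℂ, the rank of A(w) is at most the rank of A(z); i.e. the rank of A(z) is maximal on the nonvanishing locus of q. -/
/-!
The rank of `A(z)` takes finitely many values, so some `z₀` attains the maximal rank `k`. Then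
`A(z₀)` has a `k × k` minor with nonzero determinant; the same minor of `A` is a polynomial `q`
with `q(z₀) ≠ 0`, and wherever `q(z) ≠ 0` that minor of `A(z)` is invertible, forcing
`rank A(z) ≥ k`.
-/

open Matrix

namespace Matrix

variable {m n : Type*}

theorem map_det_submatrix {R S ι : Type*} [CommRing R] [CommRing S] [Fintype ι] [DecidableEq ι]
    (φ : R →+* S) (A : Matrix m n R) (f : ι → m) (g : ι → n) :
    φ (A.submatrix f g).det = ((A.map φ).submatrix f g).det := by
  rw [RingHom.map_det, RingHom.mapMatrix_apply, submatrix_map]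

theorem card_le_rank_of_det_submatrix_ne_zero {R ι : Type*} [CommRing R] [IsDomain R] [Fintype n]
    [Fintype ι] [DecidableEq ι] (M : Matrix m n R) (f : ι → m) (g : ι → n)
    (h : (M.submatrix f g).det ≠ 0) : Fintype.card ι ≤ M.rank :=
  rank_of_det_ne_zero h ▸ M.rank_submatrix_le f g

variable {K : Type*} [Fintype m] [Fintype n] [Field K]

theorem exists_linearIndependent_rows_of_rank_eq (M : Matrix m n K) {k : ℕ} (hk : M.rank = k) :
    ∃ f : Fin k → m, LinearIndependent K (M.submatrix f id).row := by
  obtain ⟨κ, a, ha, hspan, hli⟩ := exists_linearIndependent' K M.row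
  have : Fintype κ := Fintype.ofInjective a ha
  have hcard : Fintype.card κ = k := by
    rw [← hk, rank_eq_finrank_span_row, ← hspan]
    exact linearIndependent_iff_card_eq_finrank_span.mp hli
  let e : Fin k ≃ κ := (Fintype.equivFinOfCardEq hcard).symm
  exact ⟨a ∘ e, hli.comp e e.injective⟩

theorem exists_det_submatrix_ne_zero (M : Matrix m n K) :
    ∃ (f : Fin M.rank → m) (g : Fin M.rank → n), (M.submatrix f g).det ≠ 0 := by
  obtain ⟨f, hf⟩ := M.exists_linearIndependent_rows_of_rank_eq rfl
  have hrank : (M.submatrix f id)ᵀ.rank = M.rank := by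
    rw [rank_transpose, hf.rank_matrix, Fintype.card_fin]
  obtain ⟨g, hg⟩ := (M.submatrix f id)ᵀ.exists_linearIndependent_rows_of_rank_eq hrank
  exact ⟨f, g, ((isUnit_iff_isUnit_det _).mp (linearIndependent_cols_iff_isUnit.mp hg)).ne_zero⟩

end Matrix

/-- Semicontinuity of the rank of a matrix of polynomials: for a matrix `A` with entries in
`ℂ[z₁,…,z_r]` there is a nonzero polynomial `q` such that the rank of the evaluated matrix
`A(z)` is maximal whenever `q(z) ≠ 0`. -/
theorem exists_generic_rank_locus
    (r a b : ℕ) (A : Matrix (Fin b) (Fin a) (MvPolynomial (Fin r) ℂ)) :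
    ∃ q : MvPolynomial (Fin r) ℂ, q ≠ 0 ∧
      ∀ z : Fin r → ℂ, MvPolynomial.eval z q ≠ 0 →
        ∀ w : Fin r → ℂ,
          (A.map (MvPolynomial.eval w)).rank ≤ (A.map (MvPolynomial.eval z)).rank := by
  obtain ⟨_, ⟨z₀, rfl⟩, hz₀_max⟩ := BddAbove.exists_isGreatest_of_nonempty
    ⟨a, Set.forall_mem_range.mpr fun z => (A.map (MvPolynomial.eval z)).rank_le_width⟩
    (Set.range_nonempty fun z => (A.map (MvPolynomial.eval z)).rank)
  obtain ⟨f, g, hdet⟩ := (A.map (MvPolynomial.eval z₀)).exists_det_submatrix_ne_zero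
  rw [← map_det_submatrix] at hdet
  refine ⟨(A.submatrix f g).det, fun hq => hdet (by rw [hq, map_zero]), fun z hz w => ?_⟩
  rw [map_det_submatrix] at hz
  calc (A.map (MvPolynomial.eval w)).rank ≤ (A.map (MvPolynomial.eval z₀)).rank :=
        hz₀_max ⟨w, rfl⟩
    _ = Fintype.card (Fin _) := (Fintype.card_fin _).symm
    _ ≤ (A.map (MvPolynomial.eval z)).rank :=
        (A.map (MvPolynomial.eval z)).card_le_rank_of_det_submatrix_ne_zero f g hz
end

section
/- Let r, a, b, c be natural numbers, let A be a b × a matrix and B a c × b matrix with entries in MvPolynomial (Fin r) ℂ, and suppose B * A = 0. Then there exists z : Fin r → ℂ with ‖z i‖ = 1 for all i such that for every w : Fin r → ℂ, rank A(w) + rank B(w) ≤ rank A(z) + rank B(z); that is, the minimal middle homology dimension b − rank A − rank B over all of ℂ^r is attained at a point of the real torus (S¹)^r. -/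
/-!
The sum of the two ranks is bounded, so it attains its maximum at some `w₀ : Fin r → ℂ`. The
product `p` of a nonzero maximal minor of `A(w₀)` and one of `B(w₀)` is a polynomial with
`p(w₀) ≠ 0`, and at every point where `p` does not vanish neither rank is smaller than at `w₀`.
Since the circle is infinite, the nonzero polynomial `p` cannot vanish on the whole torus.
-/

open MvPolynomial

namespace Matrix

variable {K : Type*} [Field K] {m n : Type*} [Fintype m] [Fintype n]

theorem exists_linearIndependent_rows_of_le_rank (N : Matrix m n K) {k : ℕ} (hk : k ≤ N.rank) :
    ∃ f : Fin k → m, LinearIndependent K (N.row ∘ f) := by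
  obtain ⟨κ, a, ha, hspan, hli⟩ := exists_linearIndependent' K N.row
  have : Fintype κ := Fintype.ofInjective a ha
  have hcard : Fintype.card κ = N.rank := by
    rw [rank_eq_finrank_span_row, ← hspan, finrank_span_eq_card hli]
  let e : Fin k ↪ κ := (Fin.castLEEmb (hcard ▸ hk)).trans (Fintype.equivFin κ).symm.toEmbedding
  exact ⟨a ∘ e, hli.comp e e.injective⟩

theorem exists_submatrix_det_ne_zero_of_le_rank (N : Matrix m n K) {k : ℕ} (hk : k ≤ N.rank) :
    ∃ f g : Fin k → _, (N.submatrix f g).det ≠ 0 := by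
  obtain ⟨f, hf⟩ := N.exists_linearIndependent_rows_of_le_rank hk
  have hrank : (N.submatrix f id)ᵀ.rank = k := by
    rw [rank_transpose, LinearIndependent.rank_matrix (M := N.submatrix f id) hf,
      Fintype.card_fin]
  obtain ⟨g, hg⟩ := (N.submatrix f id)ᵀ.exists_linearIndependent_rows_of_le_rank hrank.ge
  refine ⟨f, g, fun h0 => ?_⟩
  have hunit : IsUnit (N.submatrix f g)ᵀ := linearIndependent_rows_iff_isUnit.mp hg
  rw [isUnit_iff_isUnit_det, det_transpose, h0] at hunit
  exact not_isUnit_zero hunit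

omit [Fintype m] in
theorem card_le_rank_of_submatrix_det_ne_zero {k : Type*} [Fintype k] [DecidableEq k]
    (N : Matrix m n K) (f : k → m) (g : k → n) (h : (N.submatrix f g).det ≠ 0) :
    Fintype.card k ≤ N.rank :=
  (rank_of_isUnit _ ((isUnit_iff_isUnit_det _).mpr h.isUnit)).symm.trans_le
    (rank_submatrix_le N f g)

theorem exists_eval_ne_zero_and_rank_map_eval_le {σ : Type*} (M : Matrix m n (MvPolynomial σ K))
    (w : σ → K) :
    ∃ p : MvPolynomial σ K, eval w p ≠ 0 ∧
      ∀ z, eval z p ≠ 0 → (M.map (eval w)).rank ≤ (M.map (eval z)).rank := by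
  obtain ⟨f, g, hfg⟩ := (M.map (eval w)).exists_submatrix_det_ne_zero_of_le_rank le_rfl
  have eval_det (x : σ → K) :
      eval x (M.submatrix f g).det = ((M.map (eval x)).submatrix f g).det := by
    rw [RingHom.map_det, RingHom.mapMatrix_apply, submatrix_map]
  refine ⟨(M.submatrix f g).det, by rwa [eval_det], fun z hz => ?_⟩
  rw [eval_det] at hz
  simpa using (M.map (eval z)).card_le_rank_of_submatrix_det_ne_zero f g hz

end Matrix

theorem MvPolynomial.exists_mem_pi_eval_ne_zero {R σ : Type*} [CommRing R] [IsDomain R]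
    (s : σ → Set R) (hs : ∀ i, (s i).Infinite) {p : MvPolynomial σ R} (hp : p ≠ 0) :
    ∃ x ∈ Set.univ.pi s, eval x p ≠ 0 := by
  contrapose! hp
  exact funext_set s hs fun x hx => by rw [hp x hx, map_zero]

theorem Complex.sphere_infinite (x : ℂ) {r : ℝ} (hr : 0 < r) : (Metric.sphere x r).Infinite := by
  refine (isPreconnected_sphere (by simp) x r).infinite_of_nontrivial
    ⟨x + r, by simp [abs_of_pos hr], x - r, by simp [abs_of_pos hr], fun h => ?_⟩
  have : (r : ℂ) = 0 := by linear_combination h / 2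
  exact hr.ne' (by exact_mod_cast this)

theorem generic_homology_attained_on_torus_general
    (r a b c : ℕ)
    (A : Matrix (Fin b) (Fin a) (MvPolynomial (Fin r) ℂ))
    (B : Matrix (Fin c) (Fin b) (MvPolynomial (Fin r) ℂ)) :
    ∃ z : Fin r → ℂ, (∀ i, ‖z i‖ = 1) ∧
      ∀ w : Fin r → ℂ,
        (A.map (MvPolynomial.eval w)).rank + (B.map (MvPolynomial.eval w)).rank ≤
          (A.map (MvPolynomial.eval z)).rank + (B.map (MvPolynomial.eval z)).rank := by
  let F (w : Fin r → ℂ) := (A.map (eval w)).rank + (B.map (eval w)).rank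
  obtain ⟨_, ⟨w₀, rfl⟩, hw₀⟩ : ∃ N, IsGreatest (Set.range F) N := by
    refine BddAbove.exists_isGreatest_of_nonempty ⟨a + b, ?_⟩ (Set.range_nonempty F)
    rintro _ ⟨w, rfl⟩
    exact add_le_add (Matrix.rank_le_width _) (Matrix.rank_le_width _)
  obtain ⟨pA, hpA, hA⟩ := A.exists_eval_ne_zero_and_rank_map_eval_le w₀
  obtain ⟨pB, hpB, hB⟩ := B.exists_eval_ne_zero_and_rank_map_eval_le w₀
  have hp : pA * pB ≠ 0 := fun h => by simpa [hpA, hpB] using congrArg (eval w₀) h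
  obtain ⟨z, hz, hpz⟩ := exists_mem_pi_eval_ne_zero (fun _ => Metric.sphere 0 1)
    (fun _ => Complex.sphere_infinite 0 one_pos) hp
  rw [map_mul, mul_ne_zero_iff] at hpz
  refine ⟨z, fun i => by simpa using hz i trivial, fun w => ?_⟩
  exact (hw₀ ⟨w, rfl⟩).trans (add_le_add (hA z hpz.1) (hB z hpz.2))

/-- The generic (maximal) value of `rank A(z) + rank B(z)` for a two-step complex of
matrices of polynomials with `B * A = 0` is attained at a point of the real torus
`(S¹)^r ⊂ (ℂ*)^r`; equivalently, the minimal middle homology dimension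
`b - rank A - rank B` is attained at a unitary point. -/
theorem generic_homology_attained_on_torus
    (r a b c : ℕ)
    (A : Matrix (Fin b) (Fin a) (MvPolynomial (Fin r) ℂ))
    (B : Matrix (Fin c) (Fin b) (MvPolynomial (Fin r) ℂ))
    (hBA : B * A = 0) :
    ∃ z : Fin r → ℂ, (∀ i, ‖z i‖ = 1) ∧
      ∀ w : Fin r → ℂ,
        (A.map (MvPolynomial.eval w)).rank + (B.map (MvPolynomial.eval w)).rank ≤
          (A.map (MvPolynomial.eval z)).rank + (B.map (MvPolynomial.eval z)).rank :=
  generic_homology_attained_on_torus_general r a b c A B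
end
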